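/- Let R be a ray with vertices v_1, v_2, ... and edges {v_n, v_{n+1}}, and let l : V(R) → [0,∞) be a non-degenerate labeling. The sequence (v_n) is a Cauchy sequence in the ultrametric space (V(R), d_l) if and only if lim_{n→∞} l(v_n) = 0. -/

import Mathlib

open SimpleGraph Filter

/-- `d` is the distance pinned by labeling `l` on graph `G`: zero on the diagonal and
otherwise the maximum of the labels over (any, hence the unique) path joining the points. -/
def PinnedDist {V : Type} (G : SimpleGraph V) (l : V → ℝ) (d : V → V → ℝ) : Prop :=
  (∀ u : V, d u u = 0) ∧
  ∀ u v : V, u ≠ v → ∀ p : G.Walk u v, p.IsPath →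
    d u v = (p.support.map l).foldr max 0

/-- A nonnegative labeling with `max (l u) (l v) > 0` on every edge. -/
def NondegLabeling {V : Type} (G : SimpleGraph V) (l : V → ℝ) : Prop :=
  (∀ v, 0 ≤ l v) ∧ ∀ u v : V, G.Adj u v → 0 < max (l u) (l v)

/-- Cauchy sequence with respect to a distance function. -/
def CauchyWith {V : Type} (d : V → V → ℝ) (x : ℕ → V) : Prop :=
  ∀ ε : ℝ, 0 < ε → ∃ N : ℕ, ∀ m ≥ N, ∀ n ≥ N, d (x m) (x n) < ε

/-- Convergence of a sequence to a point with respect to a distance function. -/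
def TendstoWith {V : Type} (d : V → V → ℝ) (x : ℕ → V) (a : V) : Prop :=
  ∀ ε : ℝ, 0 < ε → ∃ N : ℕ, ∀ n ≥ N, d (x n) a < ε

/-- Completeness: every Cauchy sequence converges. -/
def CompleteWith {V : Type} (d : V → V → ℝ) : Prop :=
  ∀ x : ℕ → V, CauchyWith d x → ∃ a : V, TendstoWith d x a

/-- Discreteness: every point is isolated. -/
def DiscreteWith {V : Type} (d : V → V → ℝ) : Prop :=
  ∀ p : V, ∃ ε : ℝ, 0 < ε ∧ ∀ x : V, x ≠ p → ε ≤ d p x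

/-- Total boundedness: finitely many open balls of any positive radius cover the space. -/
def TotallyBoundedWith {V : Type} (d : V → V → ℝ) : Prop :=
  ∀ r : ℝ, 0 < r → ∃ S : Finset V, ∀ v : V, ∃ c ∈ S, d c v < r

/-- Sequential compactness: every sequence has a convergent subsequence. -/
def SeqCompactWith {V : Type} (d : V → V → ℝ) : Prop :=
  ∀ x : ℕ → V, ∃ a : V, ∃ φ : ℕ → ℕ, StrictMono φ ∧ TendstoWith d (x ∘ φ) a

/-- `x` enumerates a ray contained in `G`: distinct vertices, consecutive ones adjacent. -/
def IsRayIn {V : Type} (G : SimpleGraph V) (x : ℕ → V) : Prop :=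
  Function.Injective x ∧ ∀ n : ℕ, G.Adj (x n) (x (n + 1))

/-- The one-sided infinite path (ray) on `ℕ`. -/
def rayGraph : SimpleGraph ℕ := SimpleGraph.fromRel fun m n => n = m + 1

lemma ray_adj (n : ℕ) : rayGraph.Adj n (n + 1) := by
  simp [rayGraph, SimpleGraph.fromRel_adj]

def rayWalk (m : ℕ) : (k : ℕ) → rayGraph.Walk m (m + k)
  | 0 => SimpleGraph.Walk.nil
  | k + 1 => (rayWalk m k).concat (ray_adj (m + k))

lemma rayWalk_support (m : ℕ) : ∀ k : ℕ, (rayWalk m k).support = List.range' m (k + 1)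
  | 0 => by simp [rayWalk]
  | k + 1 => by
    rw [rayWalk, SimpleGraph.Walk.support_concat, rayWalk_support m k,
      List.range'_1_concat (s := m) (n := k+1), List.range'_1_concat (s := m) (n := k)]

lemma rayWalk_isPath (m k : ℕ) : (rayWalk m k).IsPath := by
  rw [SimpleGraph.Walk.isPath_def, rayWalk_support]
  exact List.nodup_range'

lemma le_foldr_max {L : List ℝ} {a : ℝ} (h : a ∈ L) : a ≤ L.foldr max 0 := by
  induction L with
  | nil => simp at h
  | cons b t ih =>
    rcases List.mem_cons.1 h with rfl | h
    · exact le_max_left _ _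
    · exact (ih h).trans (le_max_right _ _)

lemma foldr_max_lt {L : List ℝ} {ε : ℝ} (hε : 0 < ε) (h : ∀ a ∈ L, a < ε) :
    L.foldr max 0 < ε := by
  induction L with
  | nil => simpa using hε
  | cons b t ih =>
    exact max_lt (h b (by simp)) (ih fun a ha => h a (List.mem_cons_of_mem _ ha))

theorem stmt7 (l : ℕ → ℝ) (hl : NondegLabeling rayGraph l)
    (d : ℕ → ℕ → ℝ) (hd : PinnedDist rayGraph l d) :
    CauchyWith d (fun n => n) ↔ Filter.Tendsto l Filter.atTop (nhds 0) := by
  have hmem : ∀ m k j, m ≤ j → j ≤ m + k → l j ∈ ((rayWalk m k).support.map l) := by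
    intro m k j h1 h2
    exact List.mem_map_of_mem (f := l) (by rw [rayWalk_support]; rw [List.mem_range'_1]; omega)
  constructor
  · intro hc
    rw [Metric.tendsto_atTop]
    intro ε hε
    obtain ⟨N, hN⟩ := hc ε hε
    refine ⟨N + 1, fun n hn => ?_⟩
    have hlt : d N n < ε := hN N le_rfl n (by omega)
    obtain ⟨k, rfl⟩ : ∃ k, n = N + k := ⟨n - N, by omega⟩
    have := hd.2 N (N + k) (by omega) (rayWalk N k) (rayWalk_isPath N k)
    have hle : l (N + k) ≤ d N (N + k) := by
      rw [this]; exact le_foldr_max (hmem N k (N + k) (by omega) le_rfl)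
    rw [Real.dist_eq, sub_zero, abs_of_nonneg (hl.1 _)]
    exact lt_of_le_of_lt hle hlt
  · intro ht
    intro ε hε
    rw [Metric.tendsto_atTop] at ht
    obtain ⟨N, hN⟩ := ht ε hε
    have hsmall : ∀ j ≥ N, l j < ε := fun j hj => by
      have := hN j hj
      rwa [Real.dist_eq, sub_zero, abs_of_nonneg (hl.1 _)] at this
    refine ⟨N, fun m hm n hn => ?_⟩
    simp only
    have key : ∀ a b : ℕ, N ≤ a → a < b → d a b < ε ∧ d b a < ε := by
      intro a b ha hab
      obtain ⟨k, rfl⟩ : ∃ k, b = a + k := ⟨b - a, by omega⟩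
      have h1 := hd.2 a (a + k) (by omega) (rayWalk a k) (rayWalk_isPath a k)
      have h2 := hd.2 (a + k) a (by omega) (rayWalk a k).reverse
        ((rayWalk_isPath a k).reverse)
      have hall : ∀ x ∈ (rayWalk a k).support.map l, x < ε := by
        intro x hx
        obtain ⟨j, hj, rfl⟩ := List.mem_map.1 hx
        rw [rayWalk_support, List.mem_range'_1] at hj
        exact hsmall j (by omega)
      constructor
      · rw [h1]; exact foldr_max_lt hε hall
      · rw [h2, SimpleGraph.Walk.support_reverse, List.map_reverse]
        exact foldr_max_lt hε (fun x hx => hall x (List.mem_reverse.1 hx))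
    rcases lt_trichotomy m n with h | h | h
    · exact (key m n hm h).1
    · rw [h, hd.1]; exact hε
    · exact (key n m hn h).2
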